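/- Let X be a Hausdorff topological space and let Δ ⊆ 2^X be closed under finite unions and contain all singletons. If the hyperspace (2^X, Δ⁺) has the Reznichenko property, then for every open set Y ⊆ X and every open Δ-cover 𝒰 of Y there is a sequence (𝒰_n : n ∈ ℕ) of pairwise disjoint finite subsets of 𝒰 such that for every D ∈ Δ with D ⊆ Y, for all but finitely many n there is U ∈ 𝒰_n with D ⊆ U. -/
import Mathlib


open Set Filter Topology

/-- The hyperspace `2^X` of all closed subsets of `X`. -/
abbrev Hyper (X : Type*) [TopologicalSpace X] := {F : Set X // IsClosed F}

/-- `A⁺ = {F ∈ 2^X : F ⊆ A}`. -/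
def plusSet {X : Type*} [TopologicalSpace X] (A : Set X) : Set (Hyper X) :=
  {F : Hyper X | (F : Set X) ⊆ A}

/-- `A⁻ = {F ∈ 2^X : F ∩ A ≠ ∅}`. -/
def minusSet {X : Type*} [TopologicalSpace X] (A : Set X) : Set (Hyper X) :=
  {F : Hyper X | ((F : Set X) ∩ A).Nonempty}

/-- The upper `Δ`-topology on `2^X`, with base `{(X∖D)⁺ : D ∈ Δ} ∪ {univ}`. -/
def upperDelta {X : Type*} [TopologicalSpace X] (Δ : Set (Set X)) :
    TopologicalSpace (Hyper X) :=
  TopologicalSpace.generateFrom ({S | ∃ D ∈ Δ, S = plusSet Dᶜ} ∪ {Set.univ})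

/-- The Fell topology on `2^X`. -/
def fellTop (X : Type*) [TopologicalSpace X] : TopologicalSpace (Hyper X) :=
  TopologicalSpace.generateFrom
    ({S | ∃ A : Set X, IsOpen A ∧ S = minusSet A} ∪
      {S | ∃ K : Set X, IsCompact K ∧ S = plusSet Kᶜ})

/-- The Reznichenko property. -/
def Reznichenko (Z : Type*) [TopologicalSpace Z] : Prop :=
  ∀ A : Set Z, ∀ z : Z, z ∈ closure A \ A →
    ∃ B : ℕ → Set Z, (∀ n, (B n).Finite ∧ B n ⊆ A) ∧
      Pairwise (Function.onFun Disjoint B) ∧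
      ∀ N ∈ nhds z, ∀ᶠ n in Filter.atTop, (N ∩ B n).Nonempty

/-- The Pytkeev property. -/
def Pytkeev (Z : Type*) [TopologicalSpace Z] : Prop :=
  ∀ A : Set Z, ∀ z : Z, z ∈ closure (A \ {z}) →
    ∃ B : ℕ → Set Z, (∀ n, B n ⊆ A ∧ (B n).Infinite) ∧
      ∀ N ∈ nhds z, ∃ n, B n ⊆ N

/-- Countable tightness. -/
def CountableTightness (Z : Type*) [TopologicalSpace Z] : Prop :=
  ∀ A : Set Z, ∀ z ∈ closure A, ∃ B ⊆ A, B.Countable ∧ z ∈ closure B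

/-- The selection principle `S₁(𝒜, ℬ)`. -/
def S1 {α : Type*} (𝒜 ℬ : Set (Set α)) : Prop :=
  ∀ f : ℕ → Set α, (∀ n, f n ∈ 𝒜) →
    ∃ b : ℕ → α, (∀ n, b n ∈ f n) ∧ Set.range b ∈ ℬ

/-- The selection principle `S_fin(𝒜, ℬ)`. -/
def Sfin {α : Type*} (𝒜 ℬ : Set (Set α)) : Prop :=
  ∀ f : ℕ → Set α, (∀ n, f n ∈ 𝒜) →
    ∃ g : ℕ → Set α, (∀ n, (g n).Finite ∧ g n ⊆ f n) ∧ (⋃ n, g n) ∈ ℬ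

/-- `Ω_z = {A : z ∈ cl(A) ∖ A}`. -/
def OmegaPt {Z : Type*} [TopologicalSpace Z] (z : Z) : Set (Set Z) :=
  {A | z ∈ closure A \ A}

/-- Groupable members of `Ω_z`. -/
def OmegaPtGp {Z : Type*} [TopologicalSpace Z] (z : Z) : Set (Set Z) :=
  {A | A ∈ OmegaPt z ∧ A.Countable ∧
    ∃ B : ℕ → Set Z, (⋃ n, B n) = A ∧ (∀ n, (B n).Finite) ∧
      Pairwise (Function.onFun Disjoint B) ∧
      ∀ N ∈ nhds z, ∀ᶠ n in Filter.atTop, (N ∩ B n).Nonempty}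

/-- `𝒰` is an open `Δ`-cover of the set `Y`. -/
def IsDCover {X : Type*} (Δ : Set (Set X)) (Y : Set X) (𝒰 : Set (Set X))
    [TopologicalSpace X] : Prop :=
  (∀ U ∈ 𝒰, IsOpen U ∧ U ⊆ Y) ∧ Y ∉ 𝒰 ∧
    ∀ D ∈ Δ, D ⊆ Y → ∃ U ∈ 𝒰, D ⊆ U

/-- `𝒰` is a groupable (countable) open `Σ`-cover of `Y`. -/
def IsGroupableCover {X : Type*} (Sg : Set (Set X)) (Y : Set X) (𝒰 : Set (Set X))
    [TopologicalSpace X] : Prop :=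
  IsDCover Sg Y 𝒰 ∧ 𝒰.Countable ∧
    ∃ P : ℕ → Set (Set X), (⋃ n, P n) = 𝒰 ∧ (∀ n, (P n).Finite) ∧
      Pairwise (Function.onFun Disjoint P) ∧
      ∀ D ∈ Sg, D ⊆ Y → ∀ᶠ n in Filter.atTop, ∃ U ∈ P n, D ⊆ U

/-- The Hurewicz covering property. -/
def HurewiczProp (Z : Type*) [TopologicalSpace Z] : Prop :=
  ∀ 𝒰 : ℕ → Set (Set Z), (∀ n, (∀ U ∈ 𝒰 n, IsOpen U) ∧ ⋃₀ 𝒰 n = Set.univ) →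
    ∃ V : ℕ → Set (Set Z), (∀ n, (V n).Finite ∧ V n ⊆ 𝒰 n) ∧
      ∀ z : Z, ∀ᶠ n in Filter.atTop, z ∈ ⋃₀ V n

/-- The Rothberger covering property. -/
def RothbergerProp (Z : Type*) [TopologicalSpace Z] : Prop :=
  ∀ 𝒰 : ℕ → Set (Set Z), (∀ n, (∀ U ∈ 𝒰 n, IsOpen U) ∧ ⋃₀ 𝒰 n = Set.univ) →
    ∃ U : ℕ → Set Z, (∀ n, U n ∈ 𝒰 n) ∧ (⋃ n, U n) = Set.univ

/-- The `(Δ⁺, Σ⁺)`-Pytkeev property of `2^X`. -/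
def PytkeevPair {X : Type*} [TopologicalSpace X] (Δ Sg : Set (Set X)) : Prop :=
  ∀ 𝒜 : Set (Hyper X), ∀ S : Hyper X,
    S ∈ @closure (Hyper X) (upperDelta Δ) (𝒜 \ {S}) →
    ∃ B : ℕ → Set (Hyper X),
      (∀ n, B n ⊆ 𝒜 ∧ (B n).Countable ∧ (B n).Infinite) ∧
      ∀ N ∈ @nhds (Hyper X) (upperDelta Sg) S, ∃ n, B n ⊆ N

/-- The `(Δ⁺, Σ⁺)`-selective Pytkeev property of `2^X`. -/
def SelPytkeevPair {X : Type*} [TopologicalSpace X] (Δ Sg : Set (Set X)) : Prop :=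
  ∀ 𝒜 : ℕ → Set (Hyper X), ∀ S : Hyper X,
    (∀ n, S ∈ @closure (Hyper X) (upperDelta Δ) (𝒜 n \ {S})) →
    ∃ B : ℕ → Set (Hyper X),
      (∀ n, B n ⊆ 𝒜 n ∧ (B n).Countable ∧ (B n).Infinite) ∧
      ∀ N ∈ @nhds (Hyper X) (upperDelta Sg) S, ∃ n, B n ⊆ N


lemma plusSet_union {X : Type*} [TopologicalSpace X] (D₁ D₂ : Set X) :
    plusSet (X := X) (D₁ ∪ D₂)ᶜ = plusSet D₁ᶜ ∩ plusSet D₂ᶜ := by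
  ext F
  simp [plusSet, Set.compl_union, Set.subset_inter_iff]

lemma nhds_key {X : Type*} [TopologicalSpace X] (Δ : Set (Set X))
    (hΔu : ∀ D₁ ∈ Δ, ∀ D₂ ∈ Δ, D₁ ∪ D₂ ∈ Δ)
    (S : Hyper X) (D₀ : Set X) (hD₀ : D₀ ∈ Δ) (hS₀ : S ∈ plusSet D₀ᶜ) :
    ∀ N : Set (Hyper X), (upperDelta Δ).IsOpen N → S ∈ N →
      ∃ D ∈ Δ, S ∈ plusSet Dᶜ ∧ plusSet Dᶜ ⊆ N := by
  intro N hN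
  induction hN with
  | basic s hs =>
    intro hSs
    rcases hs with ⟨D, hD, rfl⟩ | hs
    · exact ⟨D, hD, hSs, le_rfl⟩
    · rw [Set.mem_singleton_iff] at hs
      subst hs
      exact ⟨D₀, hD₀, hS₀, Set.subset_univ _⟩
  | univ => exact fun _ => ⟨D₀, hD₀, hS₀, by simp⟩
  | inter s t _ _ ihs iht =>
    intro hSt
    obtain ⟨D₁, hD₁, hS₁, hsub₁⟩ := ihs hSt.1
    obtain ⟨D₂, hD₂, hS₂, hsub₂⟩ := iht hSt.2
    refine ⟨D₁ ∪ D₂, hΔu _ hD₁ _ hD₂, ?_, ?_⟩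
    · rw [plusSet_union]; exact ⟨hS₁, hS₂⟩
    · rw [plusSet_union]
      exact fun F hF => ⟨hsub₁ hF.1, hsub₂ hF.2⟩
  | sUnion 𝒮 _ ih =>
    intro hS
    obtain ⟨s, hs, hSs⟩ := hS
    obtain ⟨D, hD, h1, h2⟩ := ih s hs hSs
    exact ⟨D, hD, h1, h2.trans (Set.subset_sUnion_of_mem hs)⟩

theorem stmt1 {X : Type*} [TopologicalSpace X] [T2Space X]
    (Δ : Set (Set X)) (hΔc : ∀ D ∈ Δ, IsClosed D)
    (hΔu : ∀ D₁ ∈ Δ, ∀ D₂ ∈ Δ, D₁ ∪ D₂ ∈ Δ) (hΔs : ∀ x : X, {x} ∈ Δ)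
    (h : @Reznichenko (Hyper X) (upperDelta Δ)) :
    ∀ Y : Set X, IsOpen Y → ∀ 𝒰 : Set (Set X), IsDCover Δ Y 𝒰 →
        ∃ P : ℕ → Set (Set X), (∀ n, (P n).Finite ∧ P n ⊆ 𝒰) ∧
          Pairwise (Function.onFun Disjoint P) ∧
          ∀ D ∈ Δ, D ⊆ Y → ∀ᶠ n in Filter.atTop, ∃ U ∈ P n, D ⊆ U := by 
  letI : TopologicalSpace (Hyper X) := upperDelta Δ
  intro Y hY 𝒰 h𝒰
  by_cases hex : ∃ D ∈ Δ, D ⊆ Y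
  · obtain ⟨D₀, hD₀, hD₀Y⟩ := hex
    set S : Hyper X := ⟨Yᶜ, hY.isClosed_compl⟩ with hSdef
    set 𝒜 : Set (Hyper X) := {F | ∃ U ∈ 𝒰, (F : Set X) = Uᶜ} with h𝒜def
    have hSnot : S ∉ 𝒜 := by
      rintro ⟨U, hU, hEq⟩
      exact h𝒰.2.1 (compl_injective (hEq.symm) ▸ hU)
    have hS₀ : S ∈ plusSet D₀ᶜ := compl_subset_compl.mpr hD₀Y
    have hScl : S ∈ @closure _ (upperDelta Δ) 𝒜 := by
      rw [mem_closure_iff]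
      intro O hO hSO
      obtain ⟨D, hD, hSD, hsub⟩ := nhds_key Δ hΔu S D₀ hD₀ hS₀ O hO hSO
      have hDY : D ⊆ Y := compl_subset_compl.mp hSD
      obtain ⟨U, hU, hDU⟩ := h𝒰.2.2 D hD hDY
      exact ⟨⟨Uᶜ, (h𝒰.1 U hU).1.isClosed_compl⟩,
        hsub (compl_subset_compl.mpr hDU), U, hU, rfl⟩
    obtain ⟨B, hBfin, hBdisj, hBnhd⟩ := h 𝒜 S ⟨hScl, hSnot⟩
    refine ⟨fun n => {U | U ∈ 𝒰 ∧ ∃ F ∈ B n, (F : Set X) = Uᶜ}, ?_, ?_, ?_⟩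
    · intro n
      constructor
      · apply Set.Finite.subset (((hBfin n).1.image (fun F : Hyper X => (F : Set X)ᶜ)))
        rintro U ⟨hU, F, hF, hEq⟩
        refine ⟨F, hF, ?_⟩
        show (F : Set X)ᶜ = U
        rw [hEq, compl_compl]
      · exact fun U hU => hU.1
    · intro n m hnm
      simp only [Function.onFun]
      rw [Set.disjoint_left]
      rintro U ⟨-, F₁, hF₁, hEq₁⟩ ⟨-, F₂, hF₂, hEq₂⟩
      have : F₁ = F₂ := Subtype.ext (hEq₁.trans hEq₂.symm)
      exact Set.disjoint_left.mp (hBdisj hnm) hF₁ (this ▸ hF₂)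
    · intro D hD hDY
      have hNopen : IsOpen (plusSet Dᶜ) :=
        TopologicalSpace.GenerateOpen.basic _ (Or.inl ⟨D, hD, rfl⟩)
      have hSN : S ∈ plusSet Dᶜ := compl_subset_compl.mpr hDY
      have hN : plusSet Dᶜ ∈ @nhds _ (upperDelta Δ) S :=
        hNopen.mem_nhds hSN
      filter_upwards [hBnhd _ hN] with n hn
      obtain ⟨F, hFN, hFB⟩ := hn
      obtain ⟨U, hU, hEq⟩ := (hBfin n).2 hFB
      refine ⟨U, ⟨hU, F, hFB, hEq⟩, ?_⟩
      have : (F : Set X) ⊆ Dᶜ := hFN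
      rw [hEq] at this
      exact compl_subset_compl.mp this
  · refine ⟨fun _ => ∅, fun n => ⟨Set.finite_empty, Set.empty_subset _⟩, ?_, ?_⟩
    · intro n m _; simp [Function.onFun]
    · intro D hD hDY
      exact absurd ⟨D, hD, hDY⟩ hex
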